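/- Let A be a real symmetric (n+1)×(n+1) matrix with A𝟏 = 0 and Ax = e_R − e_L (x the grid vector, h=1/n), whose central block Ā is invertible. Define G₂ as the (n+1)×(n+1) matrix which is zero except for the central block equal to Ā⁻¹. Then A·G₂ = I − e_L(𝟏−x)ᵀ − e_R xᵀ. -/
import Mathlib


open Matrix

set_option maxHeartbeats 1000000

noncomputable section

def onesVec (n : ℕ) : Fin (n+1) → ℝ := fun _ => 1

def gridVec (n : ℕ) : Fin (n+1) → ℝ := fun i => (i : ℝ) / n

def eL (n : ℕ) : Fin (n+1) → ℝ := fun i => if i.1 = 0 then 1 else 0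

def eR (n : ℕ) : Fin (n+1) → ℝ := fun i => if i.1 = n then 1 else 0

def interiorEmb (n : ℕ) : Fin (n-1) → Fin (n+1) :=
  fun i => ⟨i.1 + 1, by have := i.isLt; omega⟩

def centralBlock (n : ℕ) (A : Matrix (Fin (n+1)) (Fin (n+1)) ℝ) :
    Matrix (Fin (n-1)) (Fin (n-1)) ℝ :=
  A.submatrix (interiorEmb n) (interiorEmb n)

def pad (n : ℕ) (B : Matrix (Fin (n-1)) (Fin (n-1)) ℝ) :
    Matrix (Fin (n+1)) (Fin (n+1)) ℝ :=
  fun i j =>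
    if hi : 0 < i.1 ∧ i.1 < n then
      if hj : 0 < j.1 ∧ j.1 < n then
        B ⟨i.1 - 1, by omega⟩ ⟨j.1 - 1, by omega⟩
      else 0
    else 0

def G2 (n : ℕ) (A : Matrix (Fin (n+1)) (Fin (n+1)) ℝ) :
    Matrix (Fin (n+1)) (Fin (n+1)) ℝ :=
  pad n (centralBlock n A)⁻¹

def Aplus (n : ℕ) (A : Matrix (Fin (n+1)) (Fin (n+1)) ℝ) :
    Matrix (Fin (n+1)) (Fin (n+1)) ℝ :=
  (1 - ((n : ℝ) + 1)⁻¹ • vecMulVec (onesVec n) (onesVec n)) * G2 n A *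
      (1 - ((n : ℝ) + 1)⁻¹ • vecMulVec (onesVec n) (onesVec n)) +
    vecMulVec (gridVec n - (1/2 : ℝ) • onesVec n)
      (gridVec n - (1/2 : ℝ) • onesVec n)

lemma interiorEmb_injective (n : ℕ) : Function.Injective (interiorEmb n) := by
  intro a b h
  have : a.1 + 1 = b.1 + 1 := congrArg Fin.val h
  exact Fin.ext (by omega)

lemma sum_interior (n : ℕ) (f : Fin (n+1) → ℝ)
    (hf : ∀ k : Fin (n+1), ¬(0 < k.1 ∧ k.1 < n) → f k = 0) :
    ∑ k, f k = ∑ m : Fin (n-1), f (interiorEmb n m) := by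
  rw [← Finset.sum_image (f := f) (g := interiorEmb n) (s := Finset.univ)
        (fun x _ y _ h => interiorEmb_injective n h)]
  refine (Finset.sum_subset (Finset.subset_univ _) ?_).symm
  intro k _ hk
  refine hf k fun hint => ?_
  exact hk (Finset.mem_image.mpr ⟨⟨k.1 - 1, by omega⟩, Finset.mem_univ _, by
    apply Fin.ext; simp only [interiorEmb]; omega⟩)

lemma G2_apply_zero (n : ℕ) (A : Matrix (Fin (n+1)) (Fin (n+1)) ℝ) (k j : Fin (n+1))
    (h : ¬(0 < k.1 ∧ k.1 < n) ∨ ¬(0 < j.1 ∧ j.1 < n)) : G2 n A k j = 0 := by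
  unfold G2 pad
  rcases h with h | h
  · rw [dif_neg h]
  · by_cases hk : 0 < k.1 ∧ k.1 < n
    · rw [dif_pos hk, dif_neg h]
    · rw [dif_neg hk]

lemma sumc_lem (n : ℕ) (hn : 2 ≤ n) (A : Matrix (Fin (n+1)) (Fin (n+1)) ℝ)
    (hinv : IsUnit (centralBlock n A).det)
    (i j : Fin (n+1)) (hi : 0 < i.1 ∧ i.1 < n) (hj : 0 < j.1 ∧ j.1 < n) :
    (A * G2 n A) i j = if i = j then (1:ℝ) else 0 := by
  have hB : centralBlock n A * (centralBlock n A)⁻¹ = 1 :=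
    Matrix.mul_nonsing_inv _ hinv
  have hiemb : interiorEmb n ⟨i.1 - 1, by omega⟩ = i := by
    apply Fin.ext; simp only [interiorEmb]; omega
  rw [Matrix.mul_apply]
  rw [sum_interior n _ (fun k hk => by rw [G2_apply_zero n A k j (Or.inl hk), mul_zero])]
  have key : ∀ m : Fin (n-1),
      A i (interiorEmb n m) * G2 n A (interiorEmb n m) j
        = centralBlock n A ⟨i.1 - 1, by omega⟩ m
          * (centralBlock n A)⁻¹ m ⟨j.1 - 1, by omega⟩ := by
    intro m
    have hm : 0 < (interiorEmb n m).1 ∧ (interiorEmb n m).1 < n := by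
      simp only [interiorEmb]
      have := m.isLt; omega
    have h2 : G2 n A (interiorEmb n m) j
        = (centralBlock n A)⁻¹ m ⟨j.1 - 1, by omega⟩ := by
      show pad n (centralBlock n A)⁻¹ (interiorEmb n m) j = _
      unfold pad
      rw [dif_pos hm, dif_pos hj]
      all_goals rfl
    have h1' : A i (interiorEmb n m)
        = centralBlock n A ⟨i.1 - 1, by omega⟩ m := by
      show A i (interiorEmb n m)
        = A (interiorEmb n ⟨i.1 - 1, by omega⟩) (interiorEmb n m)
      rw [hiemb]
    rw [h1', h2]
  rw [Finset.sum_congr rfl fun m _ => key m, ← Matrix.mul_apply, hB, Matrix.one_apply]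
  by_cases h : i = j
  · rw [if_pos h, if_pos (by subst h; rfl)]
  · rw [if_neg h, if_neg (by
      intro hc
      have : i.1 - 1 = j.1 - 1 := congrArg Fin.val hc
      exact h (Fin.ext (by omega)))]

lemma suma_lem (n : ℕ) (A : Matrix (Fin (n+1)) (Fin (n+1)) ℝ)
    (hsym : A.IsSymm) (h1 : A *ᵥ onesVec n = 0) (j : Fin (n+1)) :
    ∑ i, (A * G2 n A) i j = 0 := by
  simp only [Matrix.mul_apply]
  rw [Finset.sum_comm]
  refine Finset.sum_eq_zero fun k _ => ?_
  rw [← Finset.sum_mul]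
  have h1k : ∑ i, A k i = 0 := by
    have := congrFun h1 k
    simpa [Matrix.mulVec, dotProduct, onesVec] using this
  have : ∑ i, A i k = 0 := by
    rw [Finset.sum_congr rfl fun i _ => hsym.apply k i]; exact h1k
  rw [this, zero_mul]

lemma sumb_lem (n : ℕ) (A : Matrix (Fin (n+1)) (Fin (n+1)) ℝ)
    (hsym : A.IsSymm) (hx : A *ᵥ gridVec n = eR n - eL n) (j : Fin (n+1)) :
    ∑ i, gridVec n i * (A * G2 n A) i j = 0 := by
  simp only [Matrix.mul_apply, Finset.mul_sum]
  rw [Finset.sum_comm]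
  refine Finset.sum_eq_zero fun k _ => ?_
  have hre : ∀ i, gridVec n i * (A i k * G2 n A k j)
      = (gridVec n i * A i k) * G2 n A k j := fun i => by ring
  rw [Finset.sum_congr rfl fun i _ => hre i, ← Finset.sum_mul]
  have hAx : ∑ i, gridVec n i * A i k = eR n k - eL n k := by
    have := congrFun hx k
    simp only [Matrix.mulVec, dotProduct, Pi.sub_apply] at this
    rw [← this]
    exact Finset.sum_congr rfl fun i _ => by rw [hsym.apply k i]; ring
  rw [hAx]
  by_cases hk : 0 < k.1 ∧ k.1 < n
  · have : eR n k - eL n k = 0 := by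
      simp only [eR, eL]
      rw [if_neg (by omega), if_neg (by omega)]; ring
    rw [this, zero_mul]
  · rw [G2_apply_zero n A k j (Or.inl hk), mul_zero]

theorem A_mul_G2_eq
    (n : ℕ) (hn : 2 ≤ n) (A : Matrix (Fin (n+1)) (Fin (n+1)) ℝ)
    (hsym : A.IsSymm)
    (h1 : A *ᵥ onesVec n = 0)
    (hx : A *ᵥ gridVec n = eR n - eL n)
    (hinv : IsUnit (centralBlock n A).det) :
    A * G2 n A =
      1 - vecMulVec (eL n) (onesVec n - gridVec n) - vecMulVec (eR n) (gridVec n) := by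
  have hn0 : (n : ℝ) ≠ 0 := by
    have : (0:ℝ) < n := by exact_mod_cast Nat.lt_of_lt_of_le (by norm_num) hn
    linarith
  set z : Fin (n+1) := ⟨0, by omega⟩ with hz
  set N : Fin (n+1) := ⟨n, by omega⟩ with hN
  have hzval : z.1 = 0 := rfl
  have hNval : N.1 = n := rfl
  have hgz : gridVec n z = 0 := by simp [gridVec, hzval]
  have hgN : gridVec n N = 1 := by
    show (N.1 : ℝ) / n = 1
    rw [hNval]
    exact div_self hn0
  have hNz : N ≠ z := by
    intro hc
    have := congrArg Fin.val hc
    rw [hzval, hNval] at this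
    omega
  have hNmem : N ∈ Finset.univ.erase z :=
    Finset.mem_erase.mpr ⟨hNz, Finset.mem_univ _⟩
  have split : ∀ f : Fin (n+1) → ℝ,
      ∑ i, f i = f z + f N + ∑ i ∈ (Finset.univ.erase z).erase N, f i := by
    intro f
    rw [← Finset.add_sum_erase _ f (Finset.mem_univ z),
        ← Finset.add_sum_erase _ f hNmem, add_assoc]
  have hmemS : ∀ i : Fin (n+1), i ∈ (Finset.univ.erase z).erase N ↔ (0 < i.1 ∧ i.1 < n) := by
    intro i
    constructor
    · intro h
      obtain ⟨hiN, h2⟩ := Finset.mem_erase.mp h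
      obtain ⟨hiz, -⟩ := Finset.mem_erase.mp h2
      have h1' : i.1 ≠ 0 := fun hc => hiz (Fin.ext (hc.trans hzval.symm))
      have h2' : i.1 ≠ n := fun hc => hiN (Fin.ext (hc.trans hNval.symm))
      have := Nat.lt_succ_iff.mp i.isLt
      omega
    · intro h
      refine Finset.mem_erase.mpr ⟨?_, Finset.mem_erase.mpr ⟨?_, Finset.mem_univ _⟩⟩
      · intro hc; have := congrArg Fin.val hc; rw [hNval] at this; omega
      · intro hc; have := congrArg Fin.val hc; rw [hzval] at this; omega
  ext i j
  have rhs : (1 - vecMulVec (eL n) (onesVec n - gridVec n) - vecMulVec (eR n) (gridVec n)) i j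
      = (if i = j then (1:ℝ) else 0) - (if i.1 = 0 then (1:ℝ) else 0) * (1 - gridVec n j)
        - (if i.1 = n then (1:ℝ) else 0) * gridVec n j := by
    simp [Matrix.sub_apply, Matrix.one_apply, vecMulVec_apply, eL, eR, onesVec, Pi.sub_apply]
  rw [rhs]
  by_cases hj : 0 < j.1 ∧ j.1 < n
  · have hjS : j ∈ (Finset.univ.erase z).erase N := (hmemS j).mpr hj
    have eqa := suma_lem n A hsym h1 j
    rw [split (fun i => (A * G2 n A) i j)] at eqa
    have ha' : ∑ i ∈ (Finset.univ.erase z).erase N, (A * G2 n A) i j = 1 := by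
      rw [Finset.sum_congr rfl fun i hi => sumc_lem n hn A hinv i j ((hmemS i).mp hi) hj,
          Finset.sum_ite_eq' _ j (fun _ => (1:ℝ)), if_pos hjS]
    rw [ha'] at eqa
    have eqb := sumb_lem n A hsym hx j
    rw [split (fun i => gridVec n i * (A * G2 n A) i j)] at eqb
    have hb' : ∑ i ∈ (Finset.univ.erase z).erase N, gridVec n i * (A * G2 n A) i j
        = gridVec n j := by
      have hre : ∀ i ∈ (Finset.univ.erase z).erase N,
          gridVec n i * (A * G2 n A) i j = if i = j then gridVec n i else 0 := by
        intro i hi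
        rw [sumc_lem n hn A hinv i j ((hmemS i).mp hi) hj]
        by_cases h : i = j <;> simp [h]
      rw [Finset.sum_congr rfl hre, Finset.sum_ite_eq' _ j, if_pos hjS]
    rw [hb', hgz, hgN, zero_mul, one_mul] at eqb
    have hwN : (A * G2 n A) N j = -gridVec n j := by linarith
    have hwz : (A * G2 n A) z j = gridVec n j - 1 := by linarith
    by_cases hi : 0 < i.1 ∧ i.1 < n
    · have e1 : (if i.1 = 0 then (1:ℝ) else 0) = 0 := if_neg (by omega)
      have e2 : (if i.1 = n then (1:ℝ) else 0) = 0 := if_neg (by omega)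
      rw [sumc_lem n hn A hinv i j hi hj, e1, e2]
      ring
    · rcases (by omega : i.1 = 0 ∨ i.1 = n) with h0 | h0
      · have hiz : i = z := Fin.ext (h0.trans hzval.symm)
        have hwz' : (A * G2 n A) i j = gridVec n j - 1 := by rw [hiz]; exact hwz
        have e1 : (if i.1 = 0 then (1:ℝ) else 0) = 1 := if_pos h0
        have e2 : (if i.1 = n then (1:ℝ) else 0) = 0 := if_neg (by omega)
        have e3 : (if i = j then (1:ℝ) else 0) = 0 :=
          if_neg (fun hc => by rw [← hc] at hj; omega)
        rw [hwz', e1, e2, e3]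
        ring
      · have hiN : i = N := Fin.ext (h0.trans hNval.symm)
        have hwN' : (A * G2 n A) i j = -gridVec n j := by rw [hiN]; exact hwN
        have e1 : (if i.1 = 0 then (1:ℝ) else 0) = 0 := if_neg (by omega)
        have e2 : (if i.1 = n then (1:ℝ) else 0) = 1 := if_pos h0
        have e3 : (if i = j then (1:ℝ) else 0) = 0 :=
          if_neg (fun hc => by rw [← hc] at hj; omega)
        rw [hwN', e1, e2, e3]
        ring
  · have lhs0 : (A * G2 n A) i j = 0 := by
      rw [Matrix.mul_apply]
      exact Finset.sum_eq_zero fun k _ => by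
        rw [G2_apply_zero n A k j (Or.inr hj), mul_zero]
    rw [lhs0]
    rcases (by omega : j.1 = 0 ∨ j.1 = n) with h0 | h0
    · have hgj : gridVec n j = 0 := by simp [gridVec, h0]
      rw [hgj]
      by_cases hij : i = j
      · have e1 : (if i = j then (1:ℝ) else 0) = 1 := if_pos hij
        have e2 : (if i.1 = 0 then (1:ℝ) else 0) = 1 :=
          if_pos (by rw [hij]; exact h0)
        rw [e1, e2]; ring
      · have e1 : (if i = j then (1:ℝ) else 0) = 0 := if_neg hij
        have e2 : (if i.1 = 0 then (1:ℝ) else 0) = 0 :=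
          if_neg (fun hc => hij (Fin.ext (by omega)))
        rw [e1, e2]; ring
    · have hgj : gridVec n j = 1 := by
        show (j.1 : ℝ) / n = 1
        rw [h0]; exact div_self hn0
      rw [hgj]
      by_cases hij : i = j
      · have e1 : (if i = j then (1:ℝ) else 0) = 1 := if_pos hij
        have e2 : (if i.1 = n then (1:ℝ) else 0) = 1 :=
          if_pos (by rw [hij]; exact h0)
        rw [e1, e2]; ring
      · have e1 : (if i = j then (1:ℝ) else 0) = 0 := if_neg hij
        have e2 : (if i.1 = n then (1:ℝ) else 0) = 0 :=
          if_neg (fun hc => hij (Fin.ext (by omega)))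
        rw [e1, e2]; ring
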